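/- Let S be a finite set of real numbers such that for all h, k, h', k' ∈ S with h ≠ k and h' ≠ k', the ratio (h − k)/(h' − k') is rational. If S contains at least two distinct elements, then there exists α ∈ (0,1) such that for every m ≥ 1 and all elements h_1, ..., h_m, k_1, ..., k_m of S, the sum ∑_{i=1}^{m} (h_i − k_i) belongs to ℤ·ln α. -/
import Mathlib


/-- Let `S` be a finite set of reals such that all ratios `(h − k)/(h' − k')` of nonzero
differences of elements of `S` are rational. If `S` has at least two distinct elements,
then there exists `α ∈ (0,1)` such that for every `m ≥ 1` and all elements
`h 1, ..., h m, k 1, ..., k m` of `S`, the sum `∑ i, (h i − k i)` belongs to `ℤ·ln α`. -/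
theorem sums_of_differences_in_log_lattice (S : Finset ℝ)
    (hrat : ∀ h ∈ S, ∀ k ∈ S, ∀ h' ∈ S, ∀ k' ∈ S, h ≠ k → h' ≠ k' →
      ∃ r : ℚ, (h - k) / (h' - k') = (r : ℝ))
    (hcard : ∃ a ∈ S, ∃ b ∈ S, a ≠ b) :
    ∃ α : ℝ, 0 < α ∧ α < 1 ∧
      ∀ m : ℕ, 1 ≤ m → ∀ h k : Fin m → ℝ,
        (∀ i, h i ∈ S) → (∀ i, k i ∈ S) →
        ∃ z : ℤ, ∑ i, (h i - k i) = (z : ℝ) * Real.log α := by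
  classical
  obtain ⟨a, ha, b, hb, hab⟩ := hcard
  have hd0 : b - a ≠ 0 := sub_ne_zero.2 (Ne.symm hab)
  have key : ∀ p : S × S, ∃ r : ℚ, (p.1 : ℝ) - (p.2 : ℝ) = (r : ℝ) * (b - a) := by
    rintro ⟨⟨h, hh⟩, ⟨k, hk⟩⟩
    by_cases hhk : h = k
    · exact ⟨0, by simp [hhk]⟩
    · obtain ⟨r, hr⟩ := hrat h hh k hk b hb a ha hhk (Ne.symm hab)
      exact ⟨r, by rw [div_eq_iff hd0] at hr; simpa using hr⟩
  choose f hf using key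
  set N : ℕ := ∏ p : S × S, (f p).den with hN
  have hN0 : 0 < N := Finset.prod_pos (fun p _ => (f p).pos)
  have hNne : (N : ℝ) ≠ 0 := Nat.cast_ne_zero.2 hN0.ne'
  have hint : ∀ p : S × S, ∃ z : ℤ, (f p : ℝ) * N = z := by
    intro p
    obtain ⟨c, hc⟩ := Finset.dvd_prod_of_mem (fun p => (f p).den)
      (Finset.mem_univ p)
    refine ⟨(f p).num * c, ?_⟩
    have h1 : ((f p : ℝ)) * ((f p).den : ℝ) = ((f p).num : ℝ) := by
      exact_mod_cast congrArg (fun q : ℚ => (q : ℝ)) (Rat.mul_den_eq_num (f p))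
    rw [hN, hc]
    push_cast
    calc (f p : ℝ) * (((f p).den : ℝ) * c) = ((f p : ℝ) * (f p).den) * c := by ring
      _ = ((f p).num : ℝ) * c := by rw [h1]
  choose g hg using hint
  have hDpos : 0 < |b - a| / N := div_pos (abs_pos.2 hd0) (by exact_mod_cast hN0)
  refine ⟨Real.exp (-(|b - a| / N)), Real.exp_pos _, by
    rw [Real.exp_lt_one_iff]; linarith, ?_⟩
  intro m hm h k hh hk
  have hlog : Real.log (Real.exp (-(|b - a| / N))) = -(|b - a| / N) := Real.log_exp _
  set z : ℤ := ∑ i, g (⟨h i, hh i⟩, ⟨k i, hk i⟩) with hz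
  have hsum : ∑ i, (h i - k i) = (z : ℝ) * ((b - a) / N) := by
    have hterm : ∀ i, h i - k i
        = (g (⟨h i, hh i⟩, ⟨k i, hk i⟩) : ℝ) * ((b - a) / N) := by
      intro i
      have h1 := hf (⟨h i, hh i⟩, ⟨k i, hk i⟩)
      have h2 := hg (⟨h i, hh i⟩, ⟨k i, hk i⟩)
      simp only at h1
      rw [h1, ← h2]
      field_simp
    rw [Finset.sum_congr rfl (fun i _ => hterm i), ← Finset.sum_mul, hz]
    push_cast
    ring
  rcases abs_cases (b - a) with ⟨habs, _⟩ | ⟨habs, _⟩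
  · refine ⟨-z, ?_⟩
    rw [hsum, hlog, habs]
    push_cast
    ring
  · refine ⟨z, ?_⟩
    rw [hsum, hlog, habs]
    ring
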